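/- arXiv:1406.2841 — 2 statements merged into one kernel-verified Lean document; each statement's English description precedes it below -/
import Mathlib

section
/- Let I ⊂ ℝ be a bounded interval with centre x₁⁰ and length |I|, and set ρ(x₁) := 1/√(1+(x₁−x₁⁰)²). Then for every ψ ∈ H^1_0(ℝ) (extended trivially: ψ smooth with compact support), ∫_ℝ ρ(x₁)²|ψ(x₁)|² dx₁ ≤ 16 ∫_ℝ |ψ'(x₁)|² dx₁ + (2 + 64/|I|²) ∫_I |ψ(x₁)|² dx₁. -/
open MeasureTheory Set

private lemma weighted_hardy_aux_out (L t ε : ℝ) (hL : 0 < L)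
    (hεdef : ε = 4*L^2/(L^2+64)) (ht2 : L^2 ≤ 4*t^2) :
    1 / (1 + t^2) ≤ (3*t^2 - 4*ε)/(ε + t^2)^2 := by
  have hL2 : (0:ℝ) < L^2 + 64 := by positivity
  have hε0 : 0 < ε := by rw [hεdef]; positivity
  have h1t : (0:ℝ) < 1 + t^2 := by positivity
  have hdt : (0:ℝ) < (ε + t^2)^2 := by positivity
  rw [div_le_div_iff₀ h1t hdt]
  have hid : 8*((3*t^2-4*ε)*(1+t^2) - (ε+t^2)^2)*(L^2+64)^2
      = (4*t^2 - L^2) * (4*t^2*(L^2+64)^2 + (L^2+64)*(L^4+22*L^2+384))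
        + (L^8 + 86*L^6 + 1536*L^4 + 16384*L^2) := by
    rw [hεdef]; field_simp; ring
  have hpos1 : (0:ℝ) ≤ (4*t^2 - L^2) * (4*t^2*(L^2+64)^2 + (L^2+64)*(L^4+22*L^2+384)) :=
    mul_nonneg (by linarith) (by positivity)
  have hpos2 : (0:ℝ) ≤ L^8 + 86*L^6 + 1536*L^4 + 16384*L^2 := by positivity
  have hc : (0:ℝ) < 8*(L^2+64)^2 := by positivity
  have h0 : 0 * (8*(L^2+64)^2) ≤ ((3*t^2-4*ε)*(1+t^2) - (ε+t^2)^2) * (8*(L^2+64)^2) := by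
    rw [zero_mul, show ((3*t^2-4*ε)*(1+t^2) - (ε+t^2)^2) * (8*(L^2+64)^2)
      = 8*((3*t^2-4*ε)*(1+t^2) - (ε+t^2)^2)*(L^2+64)^2 by ring, hid]
    exact add_nonneg hpos1 hpos2
  have h1 := le_of_mul_le_mul_right h0 hc
  linarith

private lemma weighted_hardy_aux_in (L t ε : ℝ) (hL : 0 < L)
    (hεdef : ε = 4*L^2/(L^2+64)) :
    1 / (1 + t^2) - (2 + 64/L^2) ≤ (3*t^2 - 4*ε)/(ε + t^2)^2 := by
  have hL0 : L ≠ 0 := ne_of_gt hL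
  have hL2 : (0:ℝ) < L^2 + 64 := by positivity
  have hε0 : 0 < ε := by rw [hεdef]; positivity
  have h1t : (0:ℝ) < 1 + t^2 := by positivity
  have h64 : (2:ℝ) + 64/L^2 = 1 + 4/ε := by
    rw [hεdef]; field_simp; ring
  rw [h64]
  have hq : -(4/ε) ≤ (3*t^2 - 4*ε)/(ε + t^2)^2 := by
    rw [show -(4/ε) = (-4)/ε by ring, div_le_div_iff₀ hε0 (by positivity)]
    nlinarith [sq_nonneg (t^2), mul_nonneg hε0.le (sq_nonneg t)]
  have hw : 1 / (1 + t^2) ≤ 1 := by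
    rw [div_le_one h1t]; nlinarith [sq_nonneg t]
  linarith

set_option maxHeartbeats 1000000 in

theorem weighted_hardy (x₀ L : ℝ) (hL : 0 < L)
    (ψ : ℝ → ℝ) (hψ : ContDiff ℝ (⊤ : ℕ∞) ψ) (hs : HasCompactSupport ψ) :
    ∫ x : ℝ, (ψ x)^2 / (1 + (x - x₀)^2)
      ≤ 16 * (∫ x : ℝ, (deriv ψ x)^2)
        + (2 + 64 / L^2) * ∫ x in Ioo (x₀ - L/2) (x₀ + L/2), (ψ x)^2 := by
  have hL0 : L ≠ 0 := ne_of_gt hL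
  have hL2 : (0:ℝ) < L^2 + 64 := by positivity
  obtain ⟨ε, hεdef⟩ : ∃ ε : ℝ, ε = 4*L^2/(L^2+64) := ⟨_, rfl⟩
  have hε0 : 0 < ε := by rw [hεdef]; positivity
  have hεL : ε * (L^2+64) = 4*L^2 := by rw [hεdef]; field_simp
  -- the multiplier and its derivative
  obtain ⟨G, hGdef⟩ : ∃ G : ℝ → ℝ, G = fun x => (x - x₀)/(4*(ε + (x-x₀)^2)) := ⟨_, rfl⟩
  obtain ⟨G', hG'def⟩ : ∃ G' : ℝ → ℝ,
      G' = fun x => (ε - (x-x₀)^2)/(4*(ε + (x-x₀)^2)^2) := ⟨_, rfl⟩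
  have hden : ∀ x : ℝ, 0 < ε + (x-x₀)^2 :=
    fun x => add_pos_of_pos_of_nonneg hε0 (sq_nonneg _)
  have hGd : ∀ x : ℝ, HasDerivAt G (G' x) x := by
    intro x
    have hd := hden x
    have h1 : HasDerivAt (fun x : ℝ => x - x₀) 1 x := (hasDerivAt_id x).sub_const x₀
    have h2 : HasDerivAt (fun x : ℝ => 4*(ε + (x-x₀)^2)) (4*(2*(x-x₀))) x := by
      have : HasDerivAt (fun x : ℝ => (x-x₀)^2) (2*(x-x₀)^1*1) x := h1.pow 2
      simpa using ((this.const_add ε).const_mul 4)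
    have hne : 4*(ε + (x-x₀)^2) ≠ 0 := by positivity
    have := h1.div h2 hne
    rw [hGdef, hG'def]
    exact this.congr_deriv (by rw [div_eq_div_iff (by positivity) (by positivity)]; ring)
  have hGc : Continuous G := by
    rw [hGdef]
    apply Continuous.div (by fun_prop) (by fun_prop)
    intro x; have := hden x; positivity
  have hG'c : Continuous G' := by
    rw [hG'def]
    apply Continuous.div (by fun_prop) (by fun_prop)
    intro x; have := hden x; positivity
  have hψc : Continuous ψ := hψ.continuous
  have hψ'c : Continuous (deriv ψ) := hψ.continuous_deriv (by simp)
  have hs' : HasCompactSupport (deriv ψ) := hs.deriv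
  have hs2 : HasCompactSupport (fun x => ψ x ^ 2) := by
    exact hs.comp_left (g := fun y : ℝ => y^2) (by norm_num)
  -- integration by parts : ∫ deriv (G ψ²) = 0
  obtain ⟨F, hFdef⟩ : ∃ F : ℝ → ℝ, F = fun x => G x * ψ x ^ 2 := ⟨_, rfl⟩
  have hψd : ∀ x : ℝ, HasDerivAt ψ (deriv ψ x) x :=
    fun x => (hψ.differentiable (by simp) x).hasDerivAt
  have hFd : ∀ x : ℝ, HasDerivAt F (G' x * ψ x ^ 2 + G x * (2 * ψ x * deriv ψ x)) x := by
    intro x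
    have h2 : HasDerivAt (fun x => ψ x ^ 2) (2 * ψ x * deriv ψ x) x := by
      simpa [mul_comm, mul_assoc] using (hψd x).fun_pow 2
    rw [hFdef]
    exact (hGd x).mul h2
  have hF1 : ContDiff ℝ 1 F := by
    rw [hFdef, hGdef]
    apply ContDiff.mul _ ((hψ.pow 2).of_le (by simp))
    apply ContDiff.div (by fun_prop) (by fun_prop)
    intro x; have := hden x; positivity
  have hFs : HasCompactSupport F := by rw [hFdef]; exact hs2.mul_left
  have hFderiv : deriv F = fun x => G' x * ψ x ^ 2 + G x * (2 * ψ x * deriv ψ x) :=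
    funext fun x => (hFd x).deriv
  have hDFc : Continuous (deriv F) := by
    rw [hFderiv]; fun_prop
  have hDFs : HasCompactSupport (deriv F) := hFs.deriv
  have ibp : ∫ x : ℝ, (G' x * ψ x ^ 2 + G x * (2 * ψ x * deriv ψ x)) = 0 := by
    rw [← hFderiv]
    have hInt : Integrable (deriv F) := hDFc.integrable_of_hasCompactSupport hDFs
    have h1 := hFs.integral_Ioi_deriv_eq hF1 0
    have h2 := hFs.integral_Iic_deriv_eq hF1 0
    rw [← intervalIntegral.integral_Iic_add_Ioi (b := (0:ℝ))
      hInt.integrableOn hInt.integrableOn, h1, h2]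
    ring
  -- integrability of all pieces
  have iA : Integrable (fun x => (deriv ψ x - G x * ψ x)^2) := by
    apply Continuous.integrable_of_hasCompactSupport (by fun_prop)
    have h : HasCompactSupport (fun x => deriv ψ x - G x * ψ x) := by
      have h1 : HasCompactSupport (fun x => G x * ψ x) := hs.mul_left
      have h2 : HasCompactSupport (fun x => -(G x * ψ x)) := h1.neg
      exact hs'.sub h1
    exact h.comp_left (g := fun y : ℝ => y^2) (by norm_num)
  have iB : Integrable (fun x => G' x * ψ x ^ 2 + G x * (2 * ψ x * deriv ψ x)) := by
    apply Continuous.integrable_of_hasCompactSupport (by fun_prop)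
    exact (hs2.mul_left).add ((hs'.mul_left).mul_left)
  have iC : Integrable (fun x => (-G' x - (G x)^2) * ψ x ^ 2) := by
    apply Continuous.integrable_of_hasCompactSupport (by fun_prop)
    exact hs2.mul_left
  have iW : Integrable (fun x => (ψ x)^2 / (1 + (x - x₀)^2)) := by
    apply Continuous.integrable_of_hasCompactSupport
    · apply Continuous.div (by fun_prop) (by fun_prop)
      intro x; positivity
    · simp only [div_eq_mul_inv]
      exact hs2.mul_right
  have iD : Integrable (fun x => (Ioo (x₀ - L/2) (x₀ + L/2)).indicator
      (fun x => (2 + 64 / L^2) * ψ x ^ 2) x) := by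
    apply Integrable.indicator _ measurableSet_Ioo
    exact ((hψc.pow 2).integrable_of_hasCompactSupport hs2).const_mul _
  have iC16 : Integrable (fun x => 16 * ((-G' x - (G x)^2) * ψ x ^ 2)) := iC.const_mul 16
  -- step 1: ∫ (-G' - G²) ψ² ≤ ∫ (deriv ψ)²
  have step1 : ∫ x : ℝ, (-G' x - (G x)^2) * ψ x ^ 2 ≤ ∫ x : ℝ, (deriv ψ x)^2 := by
    have expand : (fun x => (deriv ψ x)^2) = fun x =>
        (deriv ψ x - G x * ψ x)^2 + ((G' x * ψ x ^ 2 + G x * (2 * ψ x * deriv ψ x))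
          + (-G' x - (G x)^2) * ψ x ^ 2) := by
      funext x; ring
    have iBC : Integrable (fun x => (G' x * ψ x ^ 2 + G x * (2 * ψ x * deriv ψ x))
        + (-G' x - (G x)^2) * ψ x ^ 2) := iB.add iC
    rw [expand, integral_add iA iBC, integral_add iB iC, ibp, zero_add]
    have : 0 ≤ ∫ x : ℝ, (deriv ψ x - G x * ψ x)^2 :=
      integral_nonneg fun x => sq_nonneg _
    linarith
  -- step 2 : pointwise bound
  have point : ∀ x : ℝ, (ψ x)^2 / (1 + (x - x₀)^2)
      ≤ 16 * ((-G' x - (G x)^2) * ψ x ^ 2)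
        + (Ioo (x₀ - L/2) (x₀ + L/2)).indicator (fun x => (2 + 64 / L^2) * ψ x ^ 2) x := by
    intro x
    have hdx : 0 < ε + (x - x₀)^2 := hden x
    have hr : 16 * (-G' x - (G x)^2) = (3*(x - x₀)^2 - 4*ε)/(ε + (x - x₀)^2)^2 := by
      rw [hG'def, hGdef]
      field_simp
      ring
    have h1t : (0:ℝ) < 1 + (x - x₀)^2 := by positivity
    have hψ2 : (0:ℝ) ≤ ψ x ^ 2 := sq_nonneg _
    by_cases hx : x ∈ Ioo (x₀ - L/2) (x₀ + L/2)
    · -- inside: use  w - (2+64/L²) ≤ -4/ε ≤ 16(-G'-G²)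
      rw [indicator_of_mem hx]
      have hb : 1 / (1 + (x - x₀)^2) - (2 + 64/L^2) ≤ 16 * (-G' x - (G x)^2) := by
        rw [hr]
        exact weighted_hardy_aux_in L (x - x₀) ε hL hεdef
      have hmul := mul_le_mul_of_nonneg_right hb hψ2
      calc (ψ x)^2 / (1 + (x - x₀)^2) = (1/(1+(x - x₀)^2)) * ψ x ^2 := by ring
        _ ≤ (16 * (-G' x - (G x)^2) + (2 + 64/L^2)) * ψ x ^2 := by nlinarith [hmul]
        _ = 16 * ((-G' x - (G x)^2) * ψ x ^ 2) + (2 + 64/L^2) * ψ x ^2 := by ring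
    · -- outside : |x-x₀| ≥ L/2
      rw [indicator_of_notMem hx, add_zero]
      have ht2 : L^2 ≤ 4 * (x - x₀)^2 := by
        simp only [mem_Ioo, not_and_or, not_lt] at hx
        rcases hx with h | h
        · nlinarith
        · nlinarith
      have hb : 1 / (1 + (x - x₀)^2) ≤ 16 * (-G' x - (G x)^2) := by
        rw [hr]
        exact weighted_hardy_aux_out L (x - x₀) ε hL hεdef ht2
      have hmul := mul_le_mul_of_nonneg_right hb hψ2
      calc (ψ x)^2 / (1 + (x - x₀)^2) = (1/(1+(x - x₀)^2)) * ψ x ^2 := by ring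
        _ ≤ (16 * (-G' x - (G x)^2)) * ψ x ^2 := hmul
        _ = 16 * ((-G' x - (G x)^2) * ψ x ^ 2) := by ring
  -- combine
  have main : ∫ x : ℝ, (ψ x)^2 / (1 + (x - x₀)^2)
      ≤ ∫ x : ℝ, (16 * ((-G' x - (G x)^2) * ψ x ^ 2)
        + (Ioo (x₀ - L/2) (x₀ + L/2)).indicator (fun x => (2 + 64 / L^2) * ψ x ^ 2) x) :=
    integral_mono iW (iC16.add iD) point
  rw [integral_add iC16 iD, integral_const_mul,
    integral_indicator measurableSet_Ioo, integral_const_mul] at main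
  have h16 : 16 * ∫ x : ℝ, (-G' x - (G x)^2) * ψ x ^ 2
      ≤ 16 * ∫ x : ℝ, (deriv ψ x)^2 := by linarith
  linarith
end

section
/- Let ν > 0, let I ⊂ ℝ be a bounded interval with centre x₁⁰, and set δ := min{1, 32ν/(1+32/|I|²)}. If a quadratic form Q satisfies Q[ψ] ≥ (1/4)‖ψ'‖² + ν‖ψ‖²_{L²(I)} for all ψ ∈ H^1(ℝ) with compact support, then Q[ψ] ≥ (δ/64) ∫_ℝ |ψ(x₁)|²/(1+(x₁−x₁⁰)²) dx₁ for all such ψ. -/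
open MeasureTheory Set Filter

private lemma abs_mul_le' {p q P Q : ℝ} (hp : |p| ≤ P) (hq : |q| ≤ Q) : |p * q| ≤ P * Q := by
  rw [abs_mul]
  exact mul_le_mul hp hq (abs_nonneg _) ((abs_nonneg p).trans hp)

private lemma integrable_aux {f : ℝ → ℝ} {K : Set ℝ} (hK : IsCompact K)
    (hm : AEStronglyMeasurable f (volume : Measure ℝ))
    (h0 : ∀ x, x ∉ K → f x = 0) {C : ℝ} (hC : ∀ x, |f x| ≤ C) :
    Integrable f := by
  have hKs : MeasurableSet K := hK.isClosed.measurableSet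
  have hind : Integrable (K.indicator (fun _ => C) : ℝ → ℝ) :=
    (integrableOn_const hK.measure_lt_top.ne).integrable_indicator hKs
  refine hind.mono' hm (Filter.Eventually.of_forall fun x => ?_)
  by_cases hx : x ∈ K
  · simpa [Set.indicator_of_mem hx, Real.norm_eq_abs] using hC x
  · simp [Set.indicator_of_notMem hx, h0 x hx]

set_option maxHeartbeats 2000000 in
theorem global_hardy_step (x₀ L ν : ℝ) (hL : 0 < L) (hν : 0 < ν)
    (Q : (ℝ → ℝ) → ℝ)
    (hQ : ∀ ψ : ℝ → ℝ, ContDiff ℝ (⊤ : ℕ∞) ψ → HasCompactSupport ψ →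
      (1/4) * (∫ x : ℝ, (deriv ψ x)^2)
        + ν * (∫ x in Ioo (x₀ - L/2) (x₀ + L/2), (ψ x)^2) ≤ Q ψ) :
    ∀ ψ : ℝ → ℝ, ContDiff ℝ (⊤ : ℕ∞) ψ → HasCompactSupport ψ →
      (min 1 (32*ν/(1 + 32/L^2)) / 64) * (∫ x : ℝ, (ψ x)^2 / (1 + (x - x₀)^2)) ≤ Q ψ := by
  intro ψ hψ hψc
  have hψcont : Continuous ψ := hψ.continuous
  have hψd : Differentiable ℝ ψ := hψ.differentiable (by simp)
  have hdcont : Continuous (deriv ψ) := hψ.continuous_deriv (by simp)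
  have hdsupp : HasCompactSupport (deriv ψ) := hψc.deriv
  obtain ⟨C1, hC1⟩ := hψcont.bounded_above_of_compact_support hψc
  obtain ⟨C2, hC2⟩ := hdcont.bounded_above_of_compact_support hdsupp
  have hC1' : ∀ x, |ψ x| ≤ C1 := by simpa [Real.norm_eq_abs] using hC1
  have hC2' : ∀ x, |deriv ψ x| ≤ C2 := by simpa [Real.norm_eq_abs] using hC2
  have hC1nn : 0 ≤ C1 := (abs_nonneg _).trans (hC1' 0)
  set a := x₀ - L/2 with ha
  set b := x₀ + L/2 with hb
  have hab : a ≤ b := by simp only [ha, hb]; linarith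
  have hL2 : (0:ℝ) < L^2 := by positivity
  set F : ℝ → ℝ := fun x => if a < x ∧ x < b then -(2*(x-x₀)/L^2) else -(2*(x-x₀))⁻¹
    with hFdef
  set F' : ℝ → ℝ := fun x => if a < x ∧ x < b then -(2/L^2) else (2*(x-x₀)^2)⁻¹
    with hF'def
  -- facts about the "outside" region
  have hout : ∀ x : ℝ, ¬(a < x ∧ x < b) → L^2/4 ≤ (x - x₀)^2 := by
    intro x hx
    rcases not_and_or.1 hx with h | h
    · push_neg at h
      have : x - x₀ ≤ -(L/2) := by simp only [ha] at h; linarith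
      nlinarith
    · push_neg at h
      have : L/2 ≤ x - x₀ := by simp only [hb] at h; linarith
      nlinarith
  -- bounds on F and F'
  have hFb : ∀ x, |F x| ≤ 1/L := by
    intro x
    simp only [hFdef]
    by_cases hc : a < x ∧ x < b
    · rw [if_pos hc, abs_neg]
      obtain ⟨h1, h2⟩ := hc
      simp only [ha] at h1; simp only [hb] at h2
      rw [abs_div, abs_of_pos hL2, abs_mul, abs_two, div_le_div_iff₀ hL2 hL]
      have habs : |x - x₀| ≤ L/2 := by rw [abs_le]; constructor <;> linarith
      nlinarith [abs_nonneg (x - x₀)]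
    · rw [if_neg hc]
      have h2 := hout x hc
      have hne : (2*(x - x₀)) ≠ 0 := by
        intro h
        have : x - x₀ = 0 := by linarith [mul_eq_zero.1 h]
        rw [this] at h2; nlinarith
      rw [abs_neg, abs_inv]
      rw [one_div]
      apply inv_anti₀ hL
      have : L^2 ≤ (2*(x-x₀))^2 := by nlinarith
      nlinarith [abs_nonneg (2*(x-x₀)), sq_abs (2*(x-x₀)), abs_nonneg (2*(x-x₀))]
  have hF'b : ∀ x, |F' x| ≤ 2/L^2 := by
    intro x
    simp only [hF'def]
    by_cases hc : a < x ∧ x < b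
    · rw [if_pos hc, abs_neg, abs_of_nonneg (by positivity)]
    · rw [if_neg hc]
      have h2 := hout x hc
      have hpos : (0:ℝ) < 2*(x-x₀)^2 := by nlinarith
      rw [abs_of_nonneg (le_of_lt (inv_pos.2 hpos))]
      rw [show (2:ℝ)/L^2 = (L^2/2)⁻¹ by field_simp]
      apply inv_anti₀ (by positivity)
      nlinarith
  -- measurability
  have hFm : Measurable F := by
    simp only [hFdef]
    apply Measurable.ite (by exact measurableSet_Ioo (a := a) (b := b))
    · fun_prop
    · fun_prop
  have hF'm : Measurable F' := by
    simp only [hF'def]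
    apply Measurable.ite (by exact measurableSet_Ioo (a := a) (b := b))
    · fun_prop
    · fun_prop
  -- compact support set
  set K : Set ℝ := tsupport ψ ∪ tsupport (deriv ψ) with hKdef
  have hKc : IsCompact K := hψc.union hdsupp
  have hψ0 : ∀ x, x ∉ K → ψ x = 0 := fun x hx =>
    image_eq_zero_of_notMem_tsupport (fun h => hx (Or.inl h))
  have hd0 : ∀ x, x ∉ K → deriv ψ x = 0 := fun x hx =>
    image_eq_zero_of_notMem_tsupport (fun h => hx (Or.inr h))
  -- integrability of the various pieces
  have A0 : Integrable (fun x : ℝ => ψ x ^ 2) := by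
    refine integrable_aux hKc (hψcont.pow 2).aestronglyMeasurable
      (fun x hx => by rw [hψ0 x hx]; ring) (C := C1^2) (fun x => ?_)
    rw [abs_of_nonneg (sq_nonneg _), ← sq_abs]
    exact pow_le_pow_left₀ (abs_nonneg _) (hC1' x) 2
  have A1 : Integrable (fun x : ℝ => deriv ψ x ^ 2) := by
    refine integrable_aux hKc (hdcont.pow 2).aestronglyMeasurable
      (fun x hx => by rw [hd0 x hx]; ring) (C := C2^2) (fun x => ?_)
    rw [abs_of_nonneg (sq_nonneg _), ← sq_abs]
    exact pow_le_pow_left₀ (abs_nonneg _) (hC2' x) 2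
  have A2 : Integrable (fun x : ℝ => F x * (2 * ψ x * deriv ψ x)) := by
    refine integrable_aux hKc ?_ (fun x hx => by rw [hψ0 x hx]; ring)
      (C := (1/L) * (2 * C1 * C2)) (fun x => ?_)
    · exact (hFm.mul (((hψcont.measurable.const_mul 2).mul
        hdcont.measurable))).aestronglyMeasurable
    · refine abs_mul_le' (hFb x) ?_
      have : |2 * ψ x * deriv ψ x| = |2 * ψ x| * |deriv ψ x| := abs_mul _ _
      rw [this]
      refine mul_le_mul ?_ (hC2' x) (abs_nonneg _) (by linarith)
      rw [abs_mul, abs_two]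
      exact mul_le_mul_of_nonneg_left (hC1' x) (by norm_num)
  have A3 : Integrable (fun x : ℝ => F' x * ψ x ^ 2) := by
    refine integrable_aux hKc ?_ (fun x hx => by rw [hψ0 x hx]; ring)
      (C := (2/L^2) * C1^2) (fun x => ?_)
    · exact (hF'm.mul (hψcont.measurable.pow_const 2)).aestronglyMeasurable
    · refine abs_mul_le' (hF'b x) ?_
      rw [abs_of_nonneg (sq_nonneg _), ← sq_abs]
      exact pow_le_pow_left₀ (abs_nonneg _) (hC1' x) 2
  have A4 : Integrable (fun x : ℝ => F x ^ 2 * ψ x ^ 2) := by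
    refine integrable_aux hKc ?_ (fun x hx => by rw [hψ0 x hx]; ring)
      (C := (1/L)^2 * C1^2) (fun x => ?_)
    · exact ((hFm.pow_const 2).mul (hψcont.measurable.pow_const 2)).aestronglyMeasurable
    · refine abs_mul_le' ?_ ?_
      · rw [abs_of_nonneg (sq_nonneg _), ← sq_abs]
        exact pow_le_pow_left₀ (abs_nonneg _) (hFb x) 2
      · rw [abs_of_nonneg (sq_nonneg _), ← sq_abs]
        exact pow_le_pow_left₀ (abs_nonneg _) (hC1' x) 2
  have A5 : Integrable (fun x : ℝ => ψ x ^ 2 / (1 + (x - x₀)^2)) := by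
    refine integrable_aux hKc ?_ (fun x hx => by rw [hψ0 x hx]; simp)
      (C := C1^2) (fun x => ?_)
    · refine ((hψcont.pow 2).div ?_ ?_).aestronglyMeasurable
      · fun_prop
      · intro x
        positivity
    · have h1 : (0:ℝ) < 1 + (x - x₀)^2 := by positivity
      rw [abs_of_nonneg (div_nonneg (sq_nonneg _) h1.le)]
      refine le_trans (div_le_self (sq_nonneg _) (by nlinarith)) ?_
      rw [← sq_abs]
      exact pow_le_pow_left₀ (abs_nonneg _) (hC1' x) 2
  have A6 : Integrable ((Ioo a b).indicator (fun x : ℝ => ψ x ^ 2)) :=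
    A0.integrableOn.integrable_indicator measurableSet_Ioo
  -- g and its derivative
  set g : ℝ → ℝ := fun x => F x * ψ x ^ 2 with hgdef
  set g' : ℝ → ℝ := fun x => F' x * ψ x ^ 2 + F x * (2 * ψ x * deriv ψ x) with hg'def
  have Ag' : Integrable g' := A3.add A2
  -- tendsto 0 at ±∞
  obtain ⟨r, hr⟩ := hKc.isBounded.subset_closedBall 0
  have hg0 : ∀ x : ℝ, r < |x| → g x = 0 := by
    intro x hx
    have hxK : x ∉ K := by
      intro h
      have := hr h
      rw [Metric.mem_closedBall, Real.dist_eq, sub_zero] at this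
      linarith
    simp only [hgdef]
    rw [hψ0 x hxK]; ring
  have htop : Tendsto g atTop (nhds 0) := by
    refine tendsto_const_nhds.congr' ?_
    filter_upwards [eventually_gt_atTop r] with x hx
    exact (hg0 x (lt_of_lt_of_le hx (le_abs_self x))).symm
  have hbot : Tendsto g atBot (nhds 0) := by
    refine tendsto_const_nhds.congr' ?_
    filter_upwards [eventually_lt_atBot (-r)] with x hx
    refine (hg0 x ?_).symm
    have : r < -x := by linarith
    exact lt_of_lt_of_le this (neg_le_abs x)
  -- derivative of ψ^2
  have hsq : ∀ x : ℝ, HasDerivAt (fun y => ψ y ^ 2) (2 * ψ x * deriv ψ x) x := by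
    intro x
    have := ((hψd x).hasDerivAt).pow 2
    exact this.congr_deriv (by norm_num)
  -- derivative of g outside [a,b]
  have hgout : ∀ x : ℝ, ¬(a < x ∧ x < b) → x ∉ Icc a b →
      HasDerivAt g (g' x) x := by
    intro x hc hmem
    have hne0 : x - x₀ ≠ 0 := by
      intro h
      have := hout x hc
      rw [h] at this; nlinarith
    have hne : 2*(x - x₀) ≠ 0 := mul_ne_zero two_ne_zero hne0
    have h1 : HasDerivAt (fun y : ℝ => 2*(y - x₀)) 2 x := by
      simpa using ((hasDerivAt_id x).sub_const x₀).const_mul 2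
    have h2 : HasDerivAt (fun y : ℝ => -(2*(y - x₀))⁻¹) (2 / (2*(x - x₀))^2) x := by
      have h' := (h1.inv hne).neg
      have h'' : (2 / (2*(x - x₀))^2) = -(-2 / (2*(x - x₀))^2) := by ring
      rw [h'']
      exact h'
    have h4 := h2.mul (hsq x)
    have hval : g' x = 2 / (2*(x - x₀))^2 * ψ x ^ 2 + -(2*(x - x₀))⁻¹ * (2 * ψ x * deriv ψ x) := by
      simp only [hg'def, hFdef, hF'def, if_neg hc]
      congr 1
      congr 1
      field_simp
    rw [hval]
    refine h4.congr_of_eventuallyEq ?_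
    have hopen : IsOpen ((Icc a b)ᶜ : Set ℝ) := isClosed_Icc.isOpen_compl
    filter_upwards [hopen.mem_nhds hmem] with y hy
    have hyc : ¬(a < y ∧ y < b) := by
      intro hyy
      exact hy ⟨hyy.1.le, hyy.2.le⟩
    simp only [hgdef, hFdef, if_neg hyc, Pi.mul_apply]
  have hgIio : ∀ x ∈ Iio a, HasDerivAt g (g' x) x := by
    intro x hx
    refine hgout x ?_ ?_
    · intro h; exact absurd h.1 (not_lt.2 hx.le)
    · intro h; exact absurd h.1 (not_le.2 hx)
  have hgIoi : ∀ x ∈ Ioi b, HasDerivAt g (g' x) x := by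
    intro x hx
    refine hgout x ?_ ?_
    · intro h; exact absurd h.2 (not_lt.2 hx.le)
    · intro h; exact absurd h.2 (not_le.2 hx)
  -- derivative of g inside (a,b)
  have hgmid : ∀ x ∈ Ioo a b, HasDerivAt g (g' x) x := by
    intro x hx
    have hc : a < x ∧ x < b := hx
    have h1 : HasDerivAt (fun y : ℝ => -(2*(y - x₀)/L^2)) (-(2/L^2)) x := by
      have h0 : HasDerivAt (fun y : ℝ => 2*(y - x₀)) 2 x := by
        simpa using ((hasDerivAt_id x).sub_const x₀).const_mul 2
      exact (h0.div_const (L^2)).neg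
    have h4 := h1.mul (hsq x)
    have hval : g' x = -(2/L^2) * ψ x ^ 2 + -(2*(x - x₀)/L^2) * (2 * ψ x * deriv ψ x) := by
      simp only [hg'def, hFdef, hF'def, if_pos hc]
    rw [hval]
    refine h4.congr_of_eventuallyEq ?_
    filter_upwards [isOpen_Ioo.mem_nhds hx] with y hy
    have hyc : a < y ∧ y < b := hy
    simp only [hgdef, hFdef, if_pos hyc, Pi.mul_apply]
  -- continuity of g on the three closed regions
  have hcIic : ContinuousOn g (Iic a) := by
    have hcont : ContinuousOn (fun y : ℝ => -(2*(y - x₀))⁻¹ * ψ y ^ 2) (Iic a) := by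
      refine ContinuousOn.mul (ContinuousOn.neg (ContinuousOn.inv₀ ?_ ?_))
        ((hψcont.pow 2).continuousOn)
      · fun_prop
      · intro x hx
        have hxa : x ≤ a := hx
        simp only [ha] at hxa
        have hlt : x - x₀ < 0 := by linarith
        exact mul_ne_zero two_ne_zero (ne_of_lt hlt)
    refine hcont.congr ?_
    intro y hy
    have hyc : ¬(a < y ∧ y < b) := by
      intro h; exact absurd h.1 (not_lt.2 hy)
    simp only [hgdef, hFdef, if_neg hyc]
  have hcIci : ContinuousOn g (Ici b) := by
    have hcont : ContinuousOn (fun y : ℝ => -(2*(y - x₀))⁻¹ * ψ y ^ 2) (Ici b) := by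
      refine ContinuousOn.mul (ContinuousOn.neg (ContinuousOn.inv₀ ?_ ?_))
        ((hψcont.pow 2).continuousOn)
      · fun_prop
      · intro x hx
        have hxb : b ≤ x := hx
        simp only [hb] at hxb
        have hlt : 0 < x - x₀ := by linarith
        exact mul_ne_zero two_ne_zero (ne_of_gt hlt)
    refine hcont.congr ?_
    intro y hy
    have hyc : ¬(a < y ∧ y < b) := by
      intro h; exact absurd h.2 (not_lt.2 hy)
    simp only [hgdef, hFdef, if_neg hyc]
  have hcIcc : ContinuousOn g (Icc a b) := by
    have hcont : ContinuousOn (fun y : ℝ => -(2*(y - x₀)/L^2) * ψ y ^ 2) (Icc a b) := by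
      fun_prop
    refine hcont.congr ?_
    intro y hy
    by_cases hyc : a < y ∧ y < b
    · simp only [hgdef, hFdef, if_pos hyc]
    · have hyab : y = a ∨ y = b := by
        rcases not_and_or.1 hyc with h | h
        · left; exact le_antisymm (not_lt.1 h) hy.1
        · right; exact le_antisymm hy.2 (not_lt.1 h)
      have hval : -(2*(y - x₀))⁻¹ = -(2*(y - x₀)/L^2) := by
        have hL0 : L ≠ 0 := ne_of_gt hL
        rcases hyab with rfl | rfl
        · simp only [ha]
          rw [show (2:ℝ) * (x₀ - L/2 - x₀) = -L by ring]
          rw [inv_neg, neg_neg, neg_div, neg_neg]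
          field_simp
        · simp only [hb]
          rw [show (2:ℝ) * (x₀ + L/2 - x₀) = L by ring]
          rw [neg_inj]
          field_simp
      simp only [hgdef, hFdef, if_neg hyc]
      rw [hval]
  -- FTC on the three regions
  have hIic : ∫ x in Iic a, g' x = g a - 0 :=
    integral_Iic_of_hasDerivAt_of_tendsto (hcIic a (self_mem_Iic))
      hgIio Ag'.integrableOn hbot
  have hIoi : ∫ x in Ioi b, g' x = 0 - g b :=
    integral_Ioi_of_hasDerivAt_of_tendsto (hcIci b (self_mem_Ici))
      hgIoi Ag'.integrableOn htop
  have hmid : ∫ x in Ioc a b, g' x = g b - g a := by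
    rw [← intervalIntegral.integral_of_le hab]
    exact intervalIntegral.integral_eq_sub_of_hasDerivAt_of_le hab hcIcc hgmid
      Ag'.intervalIntegrable
  have hzero : ∫ x : ℝ, g' x = 0 := by
    have h1 : (∫ x in Ioc a b, g' x) + ∫ x in Ioi b, g' x = ∫ x in Ioi a, g' x := by
      rw [← setIntegral_union (Ioc_disjoint_Ioi le_rfl) measurableSet_Ioi
        Ag'.integrableOn Ag'.integrableOn, Ioc_union_Ioi_eq_Ioi hab]
    have h2 : (∫ x in Iic a, g' x) + ∫ x in Ioi a, g' x = ∫ x : ℝ, g' x :=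
      intervalIntegral.integral_Iic_add_Ioi Ag'.integrableOn Ag'.integrableOn
    rw [← h2, ← h1, hIic, hmid, hIoi]
    ring
  -- integration by parts identity
  have hparts : (∫ x : ℝ, F' x * ψ x ^ 2) + (∫ x : ℝ, F x * (2 * ψ x * deriv ψ x)) = 0 := by
    rw [← integral_add A3 A2]
    exact hzero
  -- quadratic expansion
  have hsqnn : (0:ℝ) ≤ ∫ x : ℝ, (deriv ψ x + F x * ψ x)^2 :=
    integral_nonneg fun x => sq_nonneg _
  have hexp : ∫ x : ℝ, (deriv ψ x + F x * ψ x)^2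
      = (∫ x : ℝ, deriv ψ x ^ 2)
        + ((∫ x : ℝ, F x * (2 * ψ x * deriv ψ x)) + ∫ x : ℝ, F x ^ 2 * ψ x ^ 2) := by
    have hptw : (fun x : ℝ => (deriv ψ x + F x * ψ x)^2)
        = fun x : ℝ => deriv ψ x ^ 2 + (F x * (2 * ψ x * deriv ψ x) + F x ^ 2 * ψ x ^ 2) := by
      funext x; ring
    have A24 : Integrable (fun x : ℝ => F x * (2 * ψ x * deriv ψ x) + F x ^ 2 * ψ x ^ 2) :=
      A2.add A4
    rw [hptw, integral_add A1 A24, integral_add A2 A4]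
  have hkey : (∫ x : ℝ, (F' x * ψ x ^ 2 - F x ^ 2 * ψ x ^ 2))
      ≤ ∫ x : ℝ, deriv ψ x ^ 2 := by
    rw [integral_sub A3 A4]
    linarith [hsqnn, hexp, hparts]
  -- pointwise comparison (a.e.)
  have hae : ∀ᵐ x : ℝ,
      (1/4) * (ψ x ^ 2 / (1 + (x - x₀)^2))
        - (1/4 + 3/L^2) * (Ioo a b).indicator (fun y => ψ y ^ 2) x
      ≤ F' x * ψ x ^ 2 - F x ^ 2 * ψ x ^ 2 := by
    have hnull : ∀ᵐ x : ℝ, x ∉ ({a, b} : Set ℝ) := by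
      rw [ae_iff]
      have h1 : {x : ℝ | ¬ x ∉ ({a, b} : Set ℝ)} = ({a, b} : Set ℝ) := by
        ext x; simp only [Set.mem_setOf_eq, not_not]
      rw [h1]
      exact ((Set.countable_singleton b).insert a).measure_zero volume
    filter_upwards [hnull] with x hx
    simp only [Set.mem_insert_iff, Set.mem_singleton_iff, not_or] at hx
    obtain ⟨hxa, hxb⟩ := hx
    have hPnn : 0 ≤ ψ x ^ 2 := sq_nonneg _
    have h1u : (0:ℝ) < 1 + (x - x₀)^2 := by positivity
    by_cases hc : a < x ∧ x < b
    · have hmem : x ∈ Ioo a b := hc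
      rw [Set.indicator_of_mem hmem]
      simp only [hFdef, hF'def, if_pos hc]
      have hu2 : (x - x₀)^2 ≤ L^2/4 := by
        obtain ⟨h1, h2⟩ := hc
        simp only [ha] at h1; simp only [hb] at h2
        nlinarith
      have hd : ψ x ^ 2 / (1 + (x - x₀)^2) ≤ ψ x ^ 2 :=
        div_le_self hPnn (by nlinarith [sq_nonneg (x - x₀)])
      have h2 : (-(2*(x - x₀)/L^2))^2 * ψ x ^ 2 ≤ (1/L^2) * ψ x ^ 2 := by
        have he : (-(2*(x - x₀)/L^2))^2 = 4*(x - x₀)^2/L^4 := by ring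
        rw [he]
        refine mul_le_mul_of_nonneg_right ?_ hPnn
        rw [div_le_div_iff₀ (by positivity) hL2]
        nlinarith [mul_le_mul_of_nonneg_right hu2 hL2.le]
      have hd4 : 1/4 * (ψ x ^ 2 / (1 + (x - x₀)^2)) ≤ 1/4 * ψ x ^ 2 := by linarith
      ring_nf at h2 hd4 ⊢
      linarith [h2, hd4]
    · have hmem : x ∉ Ioo a b := hc
      rw [Set.indicator_of_notMem hmem]
      simp only [hFdef, hF'def, if_neg hc]
      have hu2 : L^2/4 ≤ (x - x₀)^2 := hout x hc
      have hu2pos : (0:ℝ) < (x - x₀)^2 := by nlinarith [pow_pos hL 2]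
      have he : (-(2*(x - x₀))⁻¹)^2 = (4*(x - x₀)^2)⁻¹ := by
        rw [neg_sq, inv_pow, show ((2*(x - x₀)):ℝ)^2 = 4*(x - x₀)^2 by ring]
      have hval : (2*(x - x₀)^2)⁻¹ * ψ x ^ 2 - (-(2*(x - x₀))⁻¹)^2 * ψ x ^ 2
          = ψ x ^ 2 / (4*(x - x₀)^2) := by
        rw [he]
        field_simp
        ring
      rw [hval]
      have hle : ψ x ^ 2 / (1 + (x - x₀)^2) ≤ ψ x ^ 2 / (x - x₀)^2 :=
        div_le_div_of_nonneg_left hPnn hu2pos (by nlinarith)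
      have heq : (1/4) * (ψ x ^ 2 / (x - x₀)^2) = ψ x ^ 2 / (4*(x - x₀)^2) := by
        field_simp
      nlinarith [hle]
  -- integrate the pointwise bound
  have hmono : (∫ x : ℝ, ((1/4) * (ψ x ^ 2 / (1 + (x - x₀)^2))
        - (1/4 + 3/L^2) * (Ioo a b).indicator (fun y => ψ y ^ 2) x))
      ≤ ∫ x : ℝ, (F' x * ψ x ^ 2 - F x ^ 2 * ψ x ^ 2) :=
    integral_mono_ae ((A5.const_mul _).sub (A6.const_mul _)) (A3.sub A4) hae
  set W := ∫ x : ℝ, ψ x ^ 2 / (1 + (x - x₀)^2) with hW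
  set J := ∫ x in Ioo a b, ψ x ^ 2 with hJ
  set Kk := ∫ x : ℝ, deriv ψ x ^ 2 with hKk
  have hlhs : (∫ x : ℝ, ((1/4) * (ψ x ^ 2 / (1 + (x - x₀)^2))
        - (1/4 + 3/L^2) * (Ioo a b).indicator (fun y => ψ y ^ 2) x))
      = (1/4) * W - (1/4 + 3/L^2) * J := by
    rw [integral_sub (A5.const_mul _) (A6.const_mul _), integral_const_mul,
      integral_const_mul, integral_indicator measurableSet_Ioo]
  have hmain : (1/4) * W - (1/4 + 3/L^2) * J ≤ Kk := by
    rw [← hlhs]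
    exact le_trans hmono hkey
  -- nonnegativity
  have hJ0 : 0 ≤ J := setIntegral_nonneg measurableSet_Ioo (fun x _ => sq_nonneg _)
  have hK0 : 0 ≤ Kk := integral_nonneg (fun x => sq_nonneg _)
  have hW0 : 0 ≤ W := integral_nonneg (fun x => div_nonneg (sq_nonneg _) (by positivity))
  have hQψ : (1/4) * Kk + ν * J ≤ Q ψ := hQ ψ hψ hψc
  -- final combination
  set δ := min 1 (32*ν/(1 + 32/L^2)) with hδ
  have hden : (0:ℝ) < 1 + 32/L^2 := by positivity
  have hδ0 : 0 ≤ δ := le_min zero_le_one (by positivity)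
  have hδ1 : δ ≤ 1 := min_le_left _ _
  have hδ2 : δ * (1 + 32/L^2) ≤ 32*ν := (le_div_iff₀ hden).1 (min_le_right _ _)
  have hM : δ * (1/4 + 3/L^2) ≤ 16 * ν := by
    have hs : (0:ℝ) ≤ 1/L^2 := by positivity
    have h1 : 0 ≤ δ * (1/L^2) := mul_nonneg hδ0 hs
    ring_nf at hδ2 h1 ⊢
    linarith [hδ2, h1, hδ0]
  have hmain' : (1/4) * W ≤ Kk + (1/4 + 3/L^2) * J := by linarith
  have e1 : (δ/64) * W ≤ (δ/16) * (Kk + (1/4 + 3/L^2) * J) := by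
    have := mul_le_mul_of_nonneg_left hmain' (show (0:ℝ) ≤ δ/16 by positivity)
    nlinarith [this]
  have e2 : (δ/16) * (Kk + (1/4 + 3/L^2) * J) ≤ (1/4) * Kk + ν * J := by
    have t1 : (δ/16) * Kk ≤ (1/4) * Kk :=
      mul_le_mul_of_nonneg_right (by linarith) hK0
    have t2 : (δ/16 * (1/4 + 3/L^2)) * J ≤ ν * J := by
      refine mul_le_mul_of_nonneg_right ?_ hJ0
      linarith
    nlinarith [t1, t2]
  calc (δ/64) * W ≤ (δ/16) * (Kk + (1/4 + 3/L^2) * J) := e1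
    _ ≤ (1/4) * Kk + ν * J := e2
    _ ≤ Q ψ := hQψ
end
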